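/- In the non-chiral logarithmic Fock space, the ground fermions are 'harmonic': L_{−1} L̄_{−1} ξ = 0 and L_{−1} L̄_{−1} θ = 0, where ξ = −[χ_0] and θ = −[η_0]. -/

import Mathlib

noncomputable section

/-- Generators of the non-chiral symplectic fermions algebra: holomorphic
modes eta k, chi k and antiholomorphic modes etaB k, chiB k. -/
inductive NSFGen
  | eta (k : ℤ)
  | chi (k : ℤ)
  | etaB (k : ℤ)
  | chiB (k : ℤ)

/-- The free associative unital C-algebra on the generators. -/
abbrev NSFFree := FreeAlgebra ℂ NSFGen

def nge (k : ℤ) : NSFFree := FreeAlgebra.ι ℂ (NSFGen.eta k)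
def ngc (k : ℤ) : NSFFree := FreeAlgebra.ι ℂ (NSFGen.chi k)
def ngeB (k : ℤ) : NSFFree := FreeAlgebra.ι ℂ (NSFGen.etaB k)
def ngcB (k : ℤ) : NSFFree := FreeAlgebra.ι ℂ (NSFGen.chiB k)

/-- The defining relations of the non-chiral symplectic fermions algebra:
the holomorphic and antiholomorphic copies each satisfy the symplectic
fermions anticommutation relations, and the two copies anticommute. -/
inductive NSFRel : NSFFree → NSFFree → Prop
  | etaEta (k l : ℤ) : NSFRel (nge k * nge l + nge l * nge k) 0
  | chiChi (k l : ℤ) : NSFRel (ngc k * ngc l + ngc l * ngc k) 0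
  | etaChi (k l : ℤ) :
      NSFRel (nge k * ngc l + ngc l * nge k)
        (algebraMap ℂ NSFFree (if k + l = 0 then (k : ℂ) else 0))
  | etaEtaB (k l : ℤ) : NSFRel (ngeB k * ngeB l + ngeB l * ngeB k) 0
  | chiChiB (k l : ℤ) : NSFRel (ngcB k * ngcB l + ngcB l * ngcB k) 0
  | etaChiB (k l : ℤ) :
      NSFRel (ngeB k * ngcB l + ngcB l * ngeB k)
        (algebraMap ℂ NSFFree (if k + l = 0 then (k : ℂ) else 0))
  | mixedCC (k l : ℤ) : NSFRel (ngc k * ngcB l + ngcB l * ngc k) 0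
  | mixedCE (k l : ℤ) : NSFRel (ngc k * ngeB l + ngeB l * ngc k) 0
  | mixedEC (k l : ℤ) : NSFRel (nge k * ngcB l + ngcB l * nge k) 0
  | mixedEE (k l : ℤ) : NSFRel (nge k * ngeB l + ngeB l * nge k) 0

/-- The non-chiral symplectic fermions algebra SF. -/
abbrev NSF := RingQuot NSFRel

def η (k : ℤ) : NSF := RingQuot.mkAlgHom ℂ NSFRel (nge k)
def χ (k : ℤ) : NSF := RingQuot.mkAlgHom ℂ NSFRel (ngc k)
def ηB (k : ℤ) : NSF := RingQuot.mkAlgHom ℂ NSFRel (ngeB k)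
def χB (k : ℤ) : NSF := RingQuot.mkAlgHom ℂ NSFRel (ngcB k)

/-- The left ideal generated by the positive modes together with
η 0 − ηB 0 and χ 0 − χB 0. -/
def nposIdeal : Submodule NSF NSF :=
  Submodule.span NSF
    ({x | ∃ k > 0, x = η k} ∪ {x | ∃ k > 0, x = χ k} ∪
     {x | ∃ k > 0, x = ηB k} ∪ {x | ∃ k > 0, x = χB k} ∪
     {η 0 - ηB 0, χ 0 - χB 0})

/-- The non-chiral logarithmic Fock space F. -/
abbrev NFock := NSF ⧸ nposIdeal

/-- The state ω = [1]. -/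
def vac : NFock := Submodule.Quotient.mk 1
/-- The identity field. -/
def oneV : NFock := (χ 0 * η 0) • vac
/-- The ground fermion ξ. -/
def xiV : NFock := -(χ 0 • vac)
/-- The ground fermion θ. -/
def thetaV : NFock := -(η 0 • vac)

/-- Holomorphic Sugawara summand. -/
def sfterm (n k : ℤ) : NSF :=
  if n ≤ 2 * k then χ (n - k) * η k else -(η k * χ (n - k))
/-- Antiholomorphic Sugawara summand. -/
def sftermB (n k : ℤ) : NSF :=
  if n ≤ 2 * k then χB (n - k) * ηB k else -(ηB k * χB (n - k))

/-- The holomorphic Sugawara Virasoro mode L n. -/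
def L (n : ℤ) (v : NFock) : NFock := ∑ᶠ k : ℤ, sfterm n k • v
/-- The antiholomorphic Sugawara Virasoro mode Lbar n. -/
def Lb (n : ℤ) (v : NFock) : NFock := ∑ᶠ k : ℤ, sftermB n k • v

-- ==================== auxiliary lemmas ====================


private lemma ofRel0 {a b : NSFFree} (h : NSFRel (a * b + b * a) 0) :
    (RingQuot.mkAlgHom ℂ NSFRel a) * (RingQuot.mkAlgHom ℂ NSFRel b)
      + (RingQuot.mkAlgHom ℂ NSFRel b) * (RingQuot.mkAlgHom ℂ NSFRel a) = 0 := by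
  have h2 := RingQuot.mkAlgHom_rel ℂ h
  simpa only [map_add, map_mul, map_zero] using h2

private lemma acflip {a b : NSF} (h : a * b + b * a = 0) : b * a + a * b = 0 := by
  rw [add_comm]; exact h

private lemma hee (k l : ℤ) : η k * η l + η l * η k = 0 := ofRel0 (NSFRel.etaEta k l)
private lemma hcc (k l : ℤ) : χ k * χ l + χ l * χ k = 0 := ofRel0 (NSFRel.chiChi k l)

private lemma hec0 (k : ℤ) : η k * χ 0 + χ 0 * η k = 0 := by
  have h2 := RingQuot.mkAlgHom_rel ℂ (NSFRel.etaChi k 0)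
  have hc : (if k + 0 = 0 then (k:ℂ) else 0) = 0 := by
    split_ifs with h0
    · have : k = 0 := by omega
      simp [this]
    · rfl
  rw [hc] at h2
  simp only [map_add, map_mul, map_zero] at h2
  exact h2

private lemma hce0 (m : ℤ) : χ m * η 0 + η 0 * χ m = 0 := by
  have h2 := RingQuot.mkAlgHom_rel ℂ (NSFRel.etaChi 0 m)
  have hc : (if 0 + m = 0 then ((0:ℤ):ℂ) else 0) = 0 := by split_ifs <;> simp
  rw [hc] at h2
  simp only [map_add, map_mul, map_zero] at h2
  exact acflip h2

private lemma hmCC (k l : ℤ) : χ k * χB l + χB l * χ k = 0 := ofRel0 (NSFRel.mixedCC k l)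
private lemma hmCE (k l : ℤ) : χ k * ηB l + ηB l * χ k = 0 := ofRel0 (NSFRel.mixedCE k l)
private lemma hmEC (k l : ℤ) : η k * χB l + χB l * η k = 0 := ofRel0 (NSFRel.mixedEC k l)
private lemma hmEE (k l : ℤ) : η k * ηB l + ηB l * η k = 0 := ofRel0 (NSFRel.mixedEE k l)

private lemma sq_zero {a : NSF} (h : a * a + a * a = 0) : a * a = 0 := by
  have h2 : (2:ℂ) • (a * a) = 0 := by rw [two_smul]; exact h
  have h3 := congrArg (fun y => (2⁻¹:ℂ) • y) h2
  simpa [smul_smul] using h3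

private lemma eta0_sq : η 0 * η 0 = 0 := sq_zero (hee 0 0)
private lemma chi0_sq : χ 0 * χ 0 = 0 := sq_zero (hcc 0 0)

/-- module-level swap -/
private lemma sw {a b : NSF} (h : a * b + b * a = 0) (v : NFock) :
    a • (b • v) = -(b • (a • v)) := by
  have h3 : a • (b • v) + b • (a • v) = 0 := by
    rw [← mul_smul, ← mul_smul, ← add_smul, h, zero_smul]
  exact eq_neg_of_add_eq_zero_left h3

private lemma smul_vac (a : NSF) : a • vac = Submodule.Quotient.mk a := by
  rw [vac, ← Submodule.Quotient.mk_smul, smul_eq_mul, mul_one]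

private lemma vac_zero {a : NSF} (h : a ∈ nposIdeal) : a • vac = 0 := by
  rw [smul_vac]
  exact (Submodule.Quotient.mk_eq_zero _).mpr h

private lemma ann_e {k : ℤ} (hk : 0 < k) : η k • vac = 0 := by
  refine vac_zero (Submodule.subset_span ?_)
  simp only [Set.mem_union, Set.mem_setOf_eq]
  exact Or.inl (Or.inl (Or.inl (Or.inl ⟨k, hk, rfl⟩)))

private lemma ann_c {k : ℤ} (hk : 0 < k) : χ k • vac = 0 := by
  refine vac_zero (Submodule.subset_span ?_)
  simp only [Set.mem_union, Set.mem_setOf_eq]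
  exact Or.inl (Or.inl (Or.inl (Or.inr ⟨k, hk, rfl⟩)))

private lemma ann_eB {k : ℤ} (hk : 0 < k) : ηB k • vac = 0 := by
  refine vac_zero (Submodule.subset_span ?_)
  simp only [Set.mem_union, Set.mem_setOf_eq]
  exact Or.inl (Or.inl (Or.inr ⟨k, hk, rfl⟩))

private lemma ann_cB {k : ℤ} (hk : 0 < k) : χB k • vac = 0 := by
  refine vac_zero (Submodule.subset_span ?_)
  simp only [Set.mem_union, Set.mem_setOf_eq]
  exact Or.inl (Or.inr ⟨k, hk, rfl⟩)

private lemma eB0_vac : ηB 0 • vac = η 0 • vac := by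
  have h : (η 0 - ηB 0) • vac = 0 := by
    refine vac_zero (Submodule.subset_span ?_)
    simp
  rw [sub_smul] at h
  exact (sub_eq_zero.mp h).symm

private lemma cB0_vac : χB 0 • vac = χ 0 • vac := by
  have h : (χ 0 - χB 0) • vac = 0 := by
    refine vac_zero (Submodule.subset_span ?_)
    simp
  rw [sub_smul] at h
  exact (sub_eq_zero.mp h).symm

private lemma oneV_eq : oneV = χ 0 • (η 0 • vac) := by rw [oneV, mul_smul]

private lemma Lkill (k : ℤ) : sfterm (-1) k • oneV = 0 := by
  unfold sfterm
  split_ifs with h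
  · rcases eq_or_lt_of_le (by omega : (0:ℤ) ≤ k) with h0 | h0
    · obtain rfl : k = 0 := h0.symm
      rw [oneV_eq, mul_smul, sw (hec0 0), ← mul_smul (η 0) (η 0), eta0_sq]
      simp
    · rw [oneV_eq, mul_smul, sw (hec0 k), sw (hee k 0), ann_e h0]
      simp
  · push_neg at h
    rcases eq_or_lt_of_le (by omega : k ≤ -1) with h1 | h1
    · subst h1
      rw [show ((-1:ℤ) - -1) = 0 by ring, neg_smul, oneV_eq, mul_smul,
        ← mul_smul (χ 0) (χ 0), chi0_sq]
      simp
    · have hm : 0 < -1 - k := by omega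
      rw [neg_smul, oneV_eq, mul_smul, sw (hcc (-1 - k) 0), sw (hce0 (-1 - k)),
        ann_c hm]
      simp

private lemma sf_comm {c : NSF} (hc : ∀ m : ℤ, χ m * c + c * χ m = 0)
    (he : ∀ m : ℤ, η m * c + c * η m = 0) (n k : ℤ) (v : NFock) :
    sfterm n k • (c • v) = c • (sfterm n k • v) := by
  unfold sfterm
  split_ifs
  · rw [mul_smul, mul_smul, sw (he _), smul_neg, sw (hc _), neg_neg]
  · rw [neg_smul, neg_smul, mul_smul, mul_smul, sw (hc _), smul_neg, sw (he _),
      neg_neg, smul_neg]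

private lemma L_c_oneV {c : NSF} (hc : ∀ m : ℤ, χ m * c + c * χ m = 0)
    (he : ∀ m : ℤ, η m * c + c * η m = 0) :
    L (-1) (c • oneV) = 0 := by
  rw [L]
  refine finsum_eq_zero_of_forall_eq_zero fun k => ?_
  rw [sf_comm hc he, Lkill, smul_zero]

private lemma Lb_xi : Lb (-1) xiV = χB (-1) • oneV := by
  rw [Lb, finsum_eq_single _ (0:ℤ) ?_]
  · rw [sftermB, if_pos (by omega : (-1:ℤ) ≤ 2 * 0), show ((-1:ℤ) - 0) = -1 by ring,
      xiV, smul_neg, mul_smul, sw (acflip (hmCE 0 0)), eB0_vac, oneV_eq]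
    simp
  · intro x hx
    rw [sftermB, xiV, smul_neg]
    split_ifs with h
    · have hx1 : 0 < x := by omega
      rw [mul_smul, sw (acflip (hmCE 0 x)), ann_eB hx1]
      simp
    · push_neg at h
      rcases eq_or_lt_of_le (by omega : x ≤ -1) with h1 | h1
      · subst h1
        rw [show ((-1:ℤ) - -1) = 0 by ring, neg_smul, mul_smul, sw (acflip (hmCC 0 0)),
          cB0_vac, ← mul_smul (χ 0) (χ 0), chi0_sq]
        simp
      · have hm : 0 < -1 - x := by omega
        rw [neg_smul, mul_smul, sw (acflip (hmCC 0 (-1 - x))), ann_cB hm]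
        simp

private lemma Lb_theta : Lb (-1) thetaV = ηB (-1) • oneV := by
  rw [Lb, finsum_eq_single _ (-1:ℤ) ?_]
  · rw [sftermB, if_neg (by omega : ¬ (-1:ℤ) ≤ 2 * (-1)), show ((-1:ℤ) - -1) = 0 by ring,
      thetaV, smul_neg, neg_smul, neg_neg, mul_smul, sw (acflip (hmEC 0 0)), cB0_vac,
      sw (hec0 0), oneV_eq]
    simp
  · intro x hx
    rw [sftermB, thetaV, smul_neg]
    split_ifs with h
    · rcases eq_or_lt_of_le (by omega : 0 ≤ x) with h0 | h0
      · obtain rfl : x = 0 := h0.symm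
        rw [mul_smul, sw (acflip (hmEE 0 0)), eB0_vac, ← mul_smul (η 0) (η 0), eta0_sq]
        simp
      · rw [mul_smul, sw (acflip (hmEE 0 x)), ann_eB h0]
        simp
    · push_neg at h
      have hm : 0 < -1 - x := by omega
      rw [neg_smul, mul_smul, sw (acflip (hmEC 0 (-1 - x))), ann_cB hm]
      simp

/-- the ground fermions are harmonic:
L (-1) (Lbar (-1) ξ) = 0 and L (-1) (Lbar (-1) θ) = 0. -/
theorem ground_fermions_harmonic :
    L (-1) (Lb (-1) xiV) = 0 ∧ L (-1) (Lb (-1) thetaV) = 0 := by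
  constructor
  · rw [Lb_xi]
    exact L_c_oneV (fun m => hmCC m (-1)) (fun m => hmEC m (-1))
  · rw [Lb_theta]
    exact L_c_oneV (fun m => hmCE m (-1)) (fun m => hmEE m (-1))
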